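/- arXiv:2308.06669 — 3 statements merged into one kernel-verified Lean document; each statement's English description precedes it below -/
import Mathlib

section
/- Let H be a complex inner product space. Let (ψᵢ)_{i∈I} and (φⱼ)_{j∈J} be finite families of unit vectors in H, and let (aᵢ)_{i∈I} and (bⱼ)_{j∈J} be families of strictly positive real numbers with ∑ᵢ aᵢ = 1 and ∑ⱼ bⱼ = 1. If the finite-rank operators agree, i.e. for every v ∈ H, ∑ᵢ aᵢ⟨ψᵢ, v⟩ψᵢ = ∑ⱼ bⱼ⟨φⱼ, v⟩φⱼ, then the linear spans coincide: span_ℂ{ψᵢ : i ∈ I} = span_ℂ{φⱼ : j ∈ J}. -/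
/-! The kernel of `v ↦ ∑ⱼ bⱼ ⟪φⱼ, v⟫ φⱼ` with all `bⱼ > 0` is the orthogonal complement of
`span {φⱼ}`: pairing with `v` gives `∑ⱼ bⱼ ‖⟪φⱼ, v⟫‖²`, which vanishes only if every `⟪φⱼ, v⟫`
does. Hence the two decompositions of the operator have spans with the same orthogonal
complement, and finite-dimensional subspaces are determined by their orthogonal complements. -/

open scoped InnerProductSpace
open Submodule Set

section
variable {𝕜 E J : Type*} [RCLike 𝕜] [NormedAddCommGroup E] [InnerProductSpace 𝕜 E]

lemma mem_orthogonal_span_range_iff (φ : J → E) (v : E) :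
    v ∈ (span 𝕜 (range φ))ᗮ ↔ ∀ j, ⟪φ j, v⟫_𝕜 = 0 := by
  rw [← span_singleton_le_iff_mem, ← isOrtho_iff_le, isOrtho_comm, isOrtho_span]
  simp

lemma inner_sum_smul_inner_smul_self [Fintype J] (b : J → ℝ) (φ : J → E) (v : E) :
    ⟪v, ∑ j, (b j : 𝕜) • ⟪φ j, v⟫_𝕜 • φ j⟫_𝕜 = ∑ j, ((b j * ‖⟪φ j, v⟫_𝕜‖ ^ 2 : ℝ) : 𝕜) := by
  refine (inner_sum _ _ _).trans (Finset.sum_congr rfl fun j _ => ?_)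
  rw [inner_smul_right, inner_smul_right, ← inner_conj_symm v (φ j), RCLike.mul_conj]
  push_cast
  rfl

lemma sum_smul_inner_smul_eq_zero_iff [Fintype J] {b : J → ℝ} (hb : ∀ j, 0 < b j) (φ : J → E)
    (v : E) :
    ∑ j, (b j : 𝕜) • ⟪φ j, v⟫_𝕜 • φ j = 0 ↔ v ∈ (span 𝕜 (range φ))ᗮ := by
  rw [mem_orthogonal_span_range_iff]
  refine ⟨fun h j => ?_, fun h => by simp [h]⟩
  have hsum : ∑ j, b j * ‖⟪φ j, v⟫_𝕜‖ ^ 2 = 0 := by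
    have := inner_sum_smul_inner_smul_self (𝕜 := 𝕜) b φ v
    rw [h, inner_zero_right, ← RCLike.ofReal_sum, eq_comm] at this
    exact_mod_cast this
  have hterm := (Finset.sum_eq_zero_iff_of_nonneg fun j _ =>
    mul_nonneg (hb j).le (sq_nonneg _)).mp hsum j (Finset.mem_univ j)
  simpa [(hb j).ne'] using hterm

end

theorem stmt1_general {H : Type*} [NormedAddCommGroup H] [InnerProductSpace ℂ H]
    {I J : Type*} [Fintype I] [Fintype J]
    (ψ : I → H) (φ : J → H)
    (a : I → ℝ) (b : J → ℝ)
    (ha : ∀ i, 0 < a i) (hb : ∀ j, 0 < b j)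
    (hρ : ∀ v : H, ∑ i, (a i : ℂ) • ⟪ψ i, v⟫_ℂ • ψ i = ∑ j, (b j : ℂ) • ⟪φ j, v⟫_ℂ • φ j) :
    Submodule.span ℂ (Set.range ψ) = Submodule.span ℂ (Set.range φ) := by
  have := FiniteDimensional.span_of_finite ℂ (finite_range ψ)
  have := FiniteDimensional.span_of_finite ℂ (finite_range φ)
  rw [← orthogonalComplement_eq_orthogonalComplement]
  ext v
  rw [← sum_smul_inner_smul_eq_zero_iff ha, ← sum_smul_inner_smul_eq_zero_iff hb]
  -- `rw [hρ v]` fails: the coercion `ℝ → ℂ` in `hρ` is `Complex.ofReal`, the lemma's is the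
  -- definitionally equal `RCLike.ofReal`.
  exact iff_of_eq (congrArg (· = 0) (hρ v))

/-- If a density operator can be written as a strictly convex combination of
rank-one projections onto two finite families of unit vectors, then the spans of the two
families coincide. -/
theorem stmt1 {H : Type*} [NormedAddCommGroup H] [InnerProductSpace ℂ H]
    {I J : Type*} [Fintype I] [Fintype J]
    (ψ : I → H) (φ : J → H)
    (hψ : ∀ i, ‖ψ i‖ = 1) (hφ : ∀ j, ‖φ j‖ = 1)
    (a : I → ℝ) (b : J → ℝ)
    (ha : ∀ i, 0 < a i) (hb : ∀ j, 0 < b j)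
    (ha1 : ∑ i, a i = 1) (hb1 : ∑ j, b j = 1)
    (hρ : ∀ v : H, ∑ i, (a i : ℂ) • ⟪ψ i, v⟫_ℂ • ψ i = ∑ j, (b j : ℂ) • ⟪φ j, v⟫_ℂ • φ j) :
    Submodule.span ℂ (Set.range ψ) = Submodule.span ℂ (Set.range φ) :=
  stmt1_general ψ φ a b ha hb hρ
end

section
/- Let H be a complex inner product space, let ψ ∈ H be a unit vector, and let (φⱼ)_{j∈J} be a finite nonempty family of unit vectors with φⱼ ≠ ψ for all j. Then ψ lies in span_ℂ{φⱼ : j ∈ J} if and only if there exist a finite family of unit vectors (ψᵢ)_{i∈I}, an index i₀ ∈ I with ψ_{i₀} = ψ, and strictly positive reals (aᵢ)_{i∈I} and (bⱼ)_{j∈J} with ∑ᵢ aᵢ = 1 and ∑ⱼ bⱼ = 1, such that ∑ᵢ aᵢ⟨ψᵢ, v⟩ψᵢ = ∑ⱼ bⱼ⟨φⱼ, v⟩φⱼ for all v ∈ H. (Superposition is equivalent to non-unique decomposition of a mixed state.) -/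
open scoped InnerProductSpace BigOperators

/-!
If `ψ = ∑ⱼ cⱼ φⱼ`, averaging over all sign patterns `s : J → ℤˣ` kills the cross terms:
`∑ₛ |∑ⱼ sⱼ cⱼ φⱼ⟩⟨∑ⱼ sⱼ cⱼ φⱼ| = 2 ^ |J| ∑ⱼ |cⱼ|² |φⱼ⟩⟨φⱼ|`. Adding `∑ⱼ |φⱼ⟩⟨φⱼ|` to both sides
makes every weight on the `φ` side positive, the pattern `s = 1` contributes `|ψ⟩⟨ψ|`, and
normalising the nonzero vectors and then the trace gives the two decompositions.

Conversely, if `v ⟂ φⱼ` for all `j`, the mixture `ρ` annihilates `v`, and as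
`⟪v, ρ v⟫ = ∑ᵢ aᵢ |⟪ψᵢ, v⟫|²`, also `ψ ⟂ v`. So `ψ ∈ (span φ)ᗮᗮ = span φ`.
-/

theorem Fintype.sum_subtype_of_ne {ι M : Type*} [Fintype ι] [AddCommMonoid M] {p : ι → Prop}
    [DecidablePred p] (f : ι → M) (h : ∀ i, f i ≠ 0 → p i) :
    ∑ i : {i // p i}, f i = ∑ i, f i := by
  rw [← Fintype.sum_subtype_add_sum_subtype p f, Fintype.sum_eq_zero (fun i : {i // ¬ p i} => f i)
    fun i => not_imp_comm.1 (h i) i.2, add_zero]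

theorem sum_units_int_mul_eq {J : Type*} [Fintype J] [DecidableEq J] (j k : J) :
    ∑ s : J → ℤˣ, (s j * s k : ℤ) = if j = k then 2 ^ Fintype.card J else 0 := by
  split_ifs with hjk
  · subst hjk
    simp [← Units.val_mul, Int.units_mul_self, Fintype.card_units_int]
  · have hflip := Fintype.sum_equiv (Equiv.mulRight (Pi.mulSingle j (-1) : J → ℤˣ))
      (fun s => (s j * s k : ℤ)) (fun s => -(s j * s k : ℤ))
      (fun s => by simp [Ne.symm hjk])
    rw [Finset.sum_neg_distrib] at hflip
    omega

theorem AddMonoidHom.sum_units_int_map₂_sum {J G M : Type*} [Fintype J] [DecidableEq J]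
    [AddCommGroup G] [AddCommGroup M] (B : G →+ G →+ M) (x : J → G) :
    ∑ s : J → ℤˣ, B (∑ j, s j • x j) (∑ j, s j • x j) =
      2 ^ Fintype.card J • ∑ j, B (x j) (x j) := by
  have expand : ∀ s : J → ℤˣ, B (∑ j, s j • x j) (∑ j, s j • x j) =
      ∑ k, ∑ j, (s k * s j : ℤ) • B (x j) (x k) := by
    intro s
    simp only [map_sum, AddMonoidHom.finsetSum_apply, Units.smul_def, map_zsmul,
      AddMonoidHom.coe_smul, Pi.smul_apply, mul_smul, Finset.smul_sum]
  calc ∑ s : J → ℤˣ, B (∑ j, s j • x j) (∑ j, s j • x j)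
      = ∑ k, ∑ j, (∑ s : J → ℤˣ, (s k * s j : ℤ)) • B (x j) (x k) := by
        simp only [expand, Finset.sum_smul]
        rw [Finset.sum_comm]
        exact Finset.sum_congr rfl fun j _ => Finset.sum_comm
    _ = 2 ^ Fintype.card J • ∑ j, B (x j) (x j) := by
        simp [sum_units_int_mul_eq, ite_smul, Finset.smul_sum]
        norm_cast

theorem sum_units_int_norm_sum_smul_sq {J : Type*} [Fintype J] [DecidableEq J] {F : Type*}
    [NormedAddCommGroup F] [InnerProductSpace ℝ F] (x : J → F) :
    ∑ s : J → ℤˣ, ‖∑ j, s j • x j‖ ^ 2 = 2 ^ Fintype.card J • ∑ j, ‖x j‖ ^ 2 := by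
  have := (AddMonoidHom.mk' (fun w => AddMonoidHom.mk' (fun w' => ⟪w, w'⟫_ℝ)
    fun _ _ => by simp [inner_add_right]) fun _ _ => by ext; simp [inner_add_left]
  ).sum_units_int_map₂_sum x
  simpa only [AddMonoidHom.mk'_apply, real_inner_self_eq_norm_sq] using this

section
variable {𝕜 E ι : Type*} [RCLike 𝕜] [NormedAddCommGroup E] [InnerProductSpace 𝕜 E] [Fintype ι]

theorem sum_units_int_inner_smul_sum_smul {J : Type*} [Fintype J] [DecidableEq J] (x : J → E)
    (v : E) :
    ∑ s : J → ℤˣ, ⟪∑ j, s j • x j, v⟫_𝕜 • ∑ j, s j • x j =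
      2 ^ Fintype.card J • ∑ j, ⟪x j, v⟫_𝕜 • x j :=
  (AddMonoidHom.mk' (fun w => AddMonoidHom.mk' (fun w' => ⟪w, v⟫_𝕜 • w') fun _ _ => smul_add ..)
    fun _ _ => by ext; simp [inner_add_left, add_smul]).sum_units_int_map₂_sum x

theorem exists_fin_unit_family_sum_smul_inner_smul_eq (y : ι → E) {i₀ : ι} (hy : ‖y i₀‖ = 1) :
    ∃ (m : ℕ) (u : Fin m → E) (k₀ : Fin m) (a : Fin m → ℝ),
      (∀ k, ‖u k‖ = 1) ∧ u k₀ = y i₀ ∧ (∀ k, 0 < a k) ∧ ∑ k, a k = ∑ i, ‖y i‖ ^ 2 ∧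
      ∀ v, ∑ k, (a k : 𝕜) • ⟪u k, v⟫_𝕜 • u k = ∑ i, ⟪y i, v⟫_𝕜 • y i := by
  classical
  let e := Fintype.equivFin {i // y i ≠ 0}
  let z : Fin (Fintype.card {i // y i ≠ 0}) → E := fun k => y (e.symm k)
  have hz : ∀ k, 0 < ‖z k‖ := fun k => norm_pos_iff.2 (e.symm k).2
  refine ⟨_, fun k => ((‖z k‖⁻¹ : ℝ) : 𝕜) • z k, e ⟨i₀, norm_ne_zero_iff.1 (by simp [hy])⟩,
    fun k => ‖z k‖ ^ 2, fun k => ?_, ?_, fun k => pow_pos (hz k) 2, ?_, fun v => ?_⟩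
  · rw [norm_smul]
    simp [(hz k).ne']
  · simp [z, hy]
  · rw [e.symm.sum_comp (fun i => ‖y i‖ ^ 2)]
    exact Fintype.sum_subtype_of_ne (p := fun i => y i ≠ 0) (fun i => ‖y i‖ ^ 2)
      fun i hi h => hi (by simp [h])
  · rw [← Fintype.sum_subtype_of_ne (p := fun i => y i ≠ 0) _ fun i hi => right_ne_zero_of_smul hi,
      ← e.symm.sum_comp]
    refine Finset.sum_congr rfl fun k _ => ?_
    have : ((‖z k‖ : ℝ) : 𝕜) ≠ 0 := by exact_mod_cast (hz k).ne'
    rw [inner_smul_left, RCLike.conj_ofReal, smul_smul, smul_smul]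
    match_scalars
    field_simp
    rfl

theorem inner_eq_zero_of_sum_smul_inner_smul_eq_zero {u : ι → E} {a : ι → ℝ}
    (ha : ∀ i, 0 ≤ a i) {v : E} (h : ∑ i, (a i : 𝕜) • ⟪u i, v⟫_𝕜 • u i = 0)
    {i₀ : ι} (hi₀ : 0 < a i₀) : ⟪u i₀, v⟫_𝕜 = 0 := by
  have hsum : ∑ i, a i * ‖⟪u i, v⟫_𝕜‖ ^ 2 = 0 := by
    have := congrArg (fun w => ⟪v, w⟫_𝕜) h
    simp only [inner_sum, inner_smul_right, inner_zero_right, ← inner_conj_symm v (u _),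
      RCLike.mul_conj] at this
    exact_mod_cast this
  have := (Finset.sum_eq_zero_iff_of_nonneg fun i _ => mul_nonneg (ha i) (sq_nonneg _)).1 hsum
    i₀ (Finset.mem_univ _)
  simpa [hi₀.ne'] using this

theorem mem_span_of_sum_smul_inner_smul_eq {J : Type*} [Fintype J] {u : ι → E} {a : ι → ℝ}
    {φ : J → E} {b : J → 𝕜} (ha : ∀ i, 0 ≤ a i)
    (h : ∀ v, ∑ i, (a i : 𝕜) • ⟪u i, v⟫_𝕜 • u i = ∑ j, b j • ⟪φ j, v⟫_𝕜 • φ j)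
    {i₀ : ι} (hi₀ : 0 < a i₀) : u i₀ ∈ Submodule.span 𝕜 (Set.range φ) := by
  set K := Submodule.span 𝕜 (Set.range φ)
  have : FiniteDimensional 𝕜 K := FiniteDimensional.span_of_finite 𝕜 (Set.finite_range φ)
  rw [← K.orthogonal_orthogonal]
  intro v hv
  have hφv : ∀ j, ⟪φ j, v⟫_𝕜 = 0 := fun j =>
    Submodule.inner_right_of_mem_orthogonal (Submodule.subset_span (Set.mem_range_self j)) hv
  rw [inner_eq_zero_symm]
  exact inner_eq_zero_of_sum_smul_inner_smul_eq_zero ha (by simp [h, hφv]) hi₀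

theorem exists_unit_family_eq_mixture_of_mem_span {J : Type*} [Fintype J] {ψ : E} (hψ : ‖ψ‖ = 1)
    {φ : J → E} (hφ : ∀ j, ‖φ j‖ = 1) (hmem : ψ ∈ Submodule.span 𝕜 (Set.range φ)) :
    ∃ (I : Type) (_ : Fintype I) (ψ' : I → E) (i₀ : I) (a : I → ℝ) (b : J → ℝ),
      (∀ i, ‖ψ' i‖ = 1) ∧ ψ' i₀ = ψ ∧ (∀ i, 0 < a i) ∧ (∀ j, 0 < b j) ∧
      ∑ i, a i = 1 ∧ ∑ j, b j = 1 ∧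
      ∀ v, ∑ i, (a i : 𝕜) • ⟪ψ' i, v⟫_𝕜 • ψ' i = ∑ j, (b j : 𝕜) • ⟪φ j, v⟫_𝕜 • φ j := by
  classical
  obtain ⟨c, hc⟩ := (Submodule.mem_span_range_iff_exists_fun 𝕜).1 hmem
  let β : J → ℝ := fun j => 2 ^ Fintype.card J * ‖c j‖ ^ 2 + 1
  let y : (J → ℤˣ) ⊕ J → E := Sum.elim (fun s => ∑ j, s j • c j • φ j) φ
  have hy : y (.inl 1) = ψ := by simp [y, hc]
  have y_trace : ∑ i, ‖y i‖ ^ 2 = ∑ j, β j := by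
    let := InnerProductSpace.rclikeToReal 𝕜 E
    simp [y, β, Fintype.sum_sum_type, sum_units_int_norm_sum_smul_sq, norm_smul, hφ,
      Finset.mul_sum, Finset.sum_add_distrib]
  have y_op : ∀ v, ∑ i, ⟪y i, v⟫_𝕜 • y i = ∑ j, (β j : 𝕜) • ⟪φ j, v⟫_𝕜 • φ j := by
    intro v
    simp only [y, Fintype.sum_sum_type, Sum.elim_inl, Sum.elim_inr]
    rw [sum_units_int_inner_smul_sum_smul, Finset.smul_sum, ← Finset.sum_add_distrib]
    refine Finset.sum_congr rfl fun j _ => ?_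
    rw [inner_smul_left, smul_smul, smul_smul, mul_right_comm, RCLike.conj_mul]
    match_scalars
    push_cast [β]
    ring
  obtain ⟨m, u, k₀, a, hu, huk₀, ha, hsum, hop⟩ :=
    exists_fin_unit_family_sum_smul_inner_smul_eq (𝕜 := 𝕜) y (hy ▸ hψ)
  have hT : 0 < ∑ j, β j := y_trace ▸ hsum ▸ Finset.sum_pos (fun k _ => ha k) ⟨k₀, by simp⟩
  refine ⟨Fin m, inferInstance, u, k₀, fun k => a k / ∑ j, β j, fun j => β j / ∑ j, β j, hu,
    huk₀.trans hy, fun k => div_pos (ha k) hT, fun j => div_pos (by positivity) hT, ?_, ?_,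
    fun v => ?_⟩
  · rw [← Finset.sum_div, hsum, y_trace, div_self hT.ne']
  · rw [← Finset.sum_div, div_self hT.ne']
  · simp only [div_eq_inv_mul, RCLike.ofReal_mul, mul_smul, ← Finset.smul_sum, hop, y_op]

end

theorem stmt3_general {H : Type*} [NormedAddCommGroup H] [InnerProductSpace ℂ H]
    (ψ : H) (hψ : ‖ψ‖ = 1)
    {J : Type*} [Fintype J] (φ : J → H)
    (hφ : ∀ j, ‖φ j‖ = 1) :
    ψ ∈ Submodule.span ℂ (Set.range φ) ↔
      ∃ (I : Type) (_ : Fintype I) (ψ' : I → H) (i₀ : I) (a : I → ℝ) (b : J → ℝ),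
        (∀ i, ‖ψ' i‖ = 1) ∧ ψ' i₀ = ψ ∧
        (∀ i, 0 < a i) ∧ (∀ j, 0 < b j) ∧
        ∑ i, a i = 1 ∧ ∑ j, b j = 1 ∧
        ∀ v : H, ∑ i, (a i : ℂ) • ⟪ψ' i, v⟫_ℂ • ψ' i = ∑ j, (b j : ℂ) • ⟪φ j, v⟫_ℂ • φ j := by
  refine ⟨exists_unit_family_eq_mixture_of_mem_span hψ hφ, ?_⟩
  rintro ⟨I, _, ψ', i₀, a, b, -, rfl, ha, -, -, -, heq⟩
  exact mem_span_of_sum_smul_inner_smul_eq (fun i => (ha i).le) heq (ha i₀)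

/-- Superposition is equivalent to non-unique decomposition of a mixed state:
a unit vector `ψ` lies in the span of a finite nonempty family of unit vectors `φ` (with
`φ j ≠ ψ` for all `j`) iff some density operator can be written both as a strictly convex
combination of the `φ j` and as a strictly convex combination of a family of unit vectors
containing `ψ`. -/
theorem stmt3 {H : Type*} [NormedAddCommGroup H] [InnerProductSpace ℂ H]
    (ψ : H) (hψ : ‖ψ‖ = 1)
    {J : Type*} [Fintype J] [Nonempty J] (φ : J → H)
    (hφ : ∀ j, ‖φ j‖ = 1) (hφψ : ∀ j, φ j ≠ ψ) :
    ψ ∈ Submodule.span ℂ (Set.range φ) ↔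
      ∃ (I : Type) (_ : Fintype I) (ψ' : I → H) (i₀ : I) (a : I → ℝ) (b : J → ℝ),
        (∀ i, ‖ψ' i‖ = 1) ∧ ψ' i₀ = ψ ∧
        (∀ i, 0 < a i) ∧ (∀ j, 0 < b j) ∧
        ∑ i, a i = 1 ∧ ∑ j, b j = 1 ∧
        ∀ v : H, ∑ i, (a i : ℂ) • ⟪ψ' i, v⟫_ℂ • ψ' i = ∑ j, (b j : ℂ) • ⟪φ j, v⟫_ℂ • φ j :=
  stmt3_general ψ hψ φ hφ
end

section
/- Let f : ℝ → ℂ be Lebesgue integrable. If f has compact support and its Fourier transform 𝓕f (defined by (𝓕f)(ξ) = ∫_ℝ e^{−2πi x ξ} f(x) dx) also has compact support, then f = 0 almost everywhere. That is, a nonzero state cannot have compact support in both position and momentum representation. -/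
/-!
The Fourier transform of a compactly supported integrable function on `ℝ` is the restriction of
the entire function `z ↦ ∫ e^{-2πixz} f(x) dx`. If `𝓕 f` also has compact support, this entire
function vanishes on a real interval, hence everywhere by the identity theorem. Finally `𝓕` is
injective on `L¹`: pairing with Schwartz functions `φ` gives `∫ f · 𝓕 φ = ∫ 𝓕 f · φ = 0`, and
the `𝓕 φ` include every smooth compactly supported test function.
-/

open MeasureTheory FourierTransform Complex Filter Metric Topology
open scoped FourierTransform Real ContDiff

theorem HasCompactSupport.differentiable_integral_smul {X E : Type*} [TopologicalSpace X]
    [MeasurableSpace X] [OpensMeasurableSpace X] [NormedAddCommGroup E] [NormedSpace ℂ E]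
    {μ : Measure X} {k k' : X → ℂ → ℂ} (hk : Continuous (Function.uncurry k))
    (hk' : Continuous (Function.uncurry k')) (hderiv : ∀ x z, HasDerivAt (k x) (k' x z) z)
    {f : X → E} (hf : Integrable f μ) (hsupp : HasCompactSupport f) :
    Differentiable ℂ (fun z ↦ ∫ x, k x z • f x ∂μ) := by
  intro z₀
  have hmeas : ∀ {c : X → ℂ → ℂ}, Continuous (Function.uncurry c) →
      ∀ z, AEStronglyMeasurable (fun x ↦ c x z • f x) μ := fun hc z ↦
    (hc.comp (continuous_id.prodMk continuous_const)).aestronglyMeasurable.smul hf.1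
  have hdom : ∀ {c : X → ℂ → ℂ}, Continuous (Function.uncurry c) →
      ∃ C, ∀ x, ∀ z ∈ closedBall z₀ 1, ‖c x z • f x‖ ≤ C * ‖f x‖ := by
    intro c hc
    obtain ⟨C, hC⟩ :=
      (hsupp.isCompact.prod (isCompact_closedBall z₀ 1)).exists_bound_of_continuousOn hc.continuousOn
    refine ⟨C, fun x z hz ↦ ?_⟩
    by_cases hx : x ∈ tsupport f
    · rw [norm_smul]
      exact mul_le_mul_of_nonneg_right (hC (x, z) ⟨hx, hz⟩) (norm_nonneg _)
    · simp [image_eq_zero_of_notMem_tsupport hx]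
  obtain ⟨C, hC⟩ := hdom hk
  obtain ⟨C', hC'⟩ := hdom hk'
  have hint : Integrable (fun x ↦ k x z₀ • f x) μ := (hf.norm.const_mul C).mono' (hmeas hk z₀)
    (ae_of_all _ fun x ↦ hC x z₀ (mem_closedBall_self zero_le_one))
  exact (hasDerivAt_integral_of_dominated_loc_of_deriv_le (ball_mem_nhds z₀ one_pos)
    (Eventually.of_forall (hmeas hk)) hint (hmeas hk' z₀)
    (ae_of_all _ fun x z hz ↦ hC' x z (ball_subset_closedBall hz)) (hf.norm.const_mul C')
    (ae_of_all _ fun x z _ ↦ (hderiv x z).smul_const (f x))).2.differentiableAt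

theorem HasCompactSupport.exists_differentiable_eq_fourier {E : Type*} [NormedAddCommGroup E]
    [NormedSpace ℂ E] {f : ℝ → E} (hf : Integrable f) (hsupp : HasCompactSupport f) :
    ∃ F : ℂ → E, Differentiable ℂ F ∧ ∀ w : ℝ, F w = 𝓕 f w := by
  refine ⟨fun z ↦ ∫ x : ℝ, cexp (-2 * π * x * z * I) • f x,
    hsupp.differentiable_integral_smul (k := fun (x : ℝ) z ↦ cexp (-2 * π * x * z * I))
      (k' := fun (x : ℝ) z ↦ -2 * π * x * I * cexp (-2 * π * x * z * I))
      (by fun_prop) (by fun_prop) (fun x z ↦ ?_) hf, fun w ↦ ?_⟩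
  · simpa [mul_comm, mul_left_comm, mul_assoc] using
      ((hasDerivAt_id z).const_mul (-2 * π * x * I : ℂ)).cexp
  · simp [Real.fourier_real_eq_integral_exp_smul]

theorem Differentiable.eq_zero_of_eventually_eq_zero_ofReal {E : Type*} [NormedAddCommGroup E]
    [NormedSpace ℂ E] [CompleteSpace E] {F : ℂ → E} (hF : Differentiable ℂ F) {t₀ : ℝ}
    (h : ∀ᶠ t : ℝ in 𝓝 t₀, F t = 0) : F = 0 := by
  have hofReal : Tendsto ((↑) : ℝ → ℂ) (𝓝[≠] t₀) (𝓝[≠] (t₀ : ℂ)) :=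
    continuous_ofReal.continuousWithinAt.tendsto_nhdsWithin fun t ht ↦ by simpa using ht
  have hfreq : ∃ᶠ z in 𝓝[≠] (t₀ : ℂ), F z = 0 :=
    hofReal.frequently (h.filter_mono nhdsWithin_le_nhds).frequently
  funext z
  exact (analyticOnNhd_univ_iff_differentiable.2 hF).eqOn_zero_of_preconnected_of_frequently_eq_zero
    isPreconnected_univ (Set.mem_univ _) hfreq (Set.mem_univ z)

theorem HasCompactSupport.fourier_eq_zero {E : Type*} [NormedAddCommGroup E] [NormedSpace ℂ E]
    [CompleteSpace E] {f : ℝ → E} (hf : Integrable f) (hsupp : HasCompactSupport f)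
    (h𝓕f : HasCompactSupport (𝓕 f)) : 𝓕 f = 0 := by
  obtain ⟨F, hF, hFf⟩ := hsupp.exists_differentiable_eq_fourier hf
  obtain ⟨t₀, ht₀⟩ := (Set.ne_univ_iff_exists_notMem _).1 h𝓕f.isCompact.ne_univ
  have hF₀ : F = 0 := hF.eq_zero_of_eventually_eq_zero_ofReal <|
    (notMem_tsupport_iff_eventuallyEq.1 ht₀).mono fun t ht ↦ by rw [hFf, ht, Pi.zero_apply]
  funext w
  rw [← hFf, hF₀, Pi.zero_apply, Pi.zero_apply]

theorem MeasureTheory.Integrable.ae_eq_zero_of_fourier_eq_zero {V : Type*}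
    [NormedAddCommGroup V] [InnerProductSpace ℝ V] [FiniteDimensional ℝ V]
    [MeasurableSpace V] [BorelSpace V] {f : V → ℂ} (hf : Integrable f) (h𝓕f : 𝓕 f = 0) :
    f =ᵐ[volume] 0 := by
  refine ae_eq_zero_of_integral_contDiff_smul_eq_zero hf.locallyIntegrable
    fun g g_smooth g_supp ↦ ?_
  have hg₁ : HasCompactSupport (ofRealCLM ∘ g) := g_supp.comp_left rfl
  have hg₂ : ContDiff ℝ ∞ (ofRealCLM ∘ g) := by fun_prop
  obtain ⟨φ, hφ⟩ : ∃ φ : SchwartzMap V ℂ, 𝓕 φ = hg₁.toSchwartzMap hg₂ :=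
    ⟨𝓕⁻ (hg₁.toSchwartzMap hg₂), FourierTransform.fourier_fourierInv_eq _⟩
  replace hφ : 𝓕 (φ : V → ℂ) = fun x ↦ (g x : ℂ) := by
    rw [← SchwartzMap.fourier_coe, hφ]
    rfl
  have hself := VectorFourier.integral_fourierIntegral_smul_eq_flip (L := innerₗ V)
    Real.continuous_fourierChar continuous_inner hf (φ.integrable (μ := volume))
  rw [flip_innerₗ] at hself
  calc ∫ x, g x • f x = ∫ x, f x • 𝓕 (φ : V → ℂ) x := by
        simp [hφ, real_smul, mul_comm]
    _ = ∫ ξ, 𝓕 f ξ • φ ξ := hself.symm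
    _ = 0 := by simp [h𝓕f]

/-- An integrable function `f : ℝ → ℂ` with compact support whose Fourier
transform also has compact support vanishes almost everywhere. -/
theorem stmt17 (f : ℝ → ℂ) (hf : Integrable f volume)
    (hsupp : HasCompactSupport f)
    (hfourier : HasCompactSupport (𝓕 f)) :
    f =ᵐ[volume] 0 :=
  hf.ae_eq_zero_of_fourier_eq_zero (hsupp.fourier_eq_zero hf hfourier)
end
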